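/- Let f : Λ → Γ be a surjective and locally surjective graph morphism between finite simplicial graphs. Then the right-angled Coxeter group C(Γ^c) embeds quasi-isometrically into C(Λ^c) via the diagonal homomorphism. -/

import Mathlib

namespace Paper

variable {V : Type*}

/-- Relators of the right-angled Artin group: commutators of adjacent vertices. -/
def raagRels (G : SimpleGraph V) : Set (FreeGroup V) :=
  {r | ∃ u v : V, G.Adj u v ∧
    r = FreeGroup.of u * FreeGroup.of v * (FreeGroup.of u)⁻¹ * (FreeGroup.of v)⁻¹}

/-- The right-angled Artin group on a simple graph. -/
def RAAG (G : SimpleGraph V) : Type _ :=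
  PresentedGroup (raagRels G)

instance (G : SimpleGraph V) : Group (RAAG G) :=
  inferInstanceAs (Group (PresentedGroup (raagRels G)))

/-- The generator of `RAAG G` corresponding to a vertex. -/
def raagOf (G : SimpleGraph V) (v : V) : RAAG G :=
  PresentedGroup.of v

/-- Evaluation of a word (a list of letters, each a vertex with a sign) in `RAAG G`. -/
def raagWord (G : SimpleGraph V) (w : List (V × Bool)) : RAAG G :=
  (w.map fun p => if p.2 then raagOf G p.1 else (raagOf G p.1)⁻¹).prod

/-- A word is reduced if any word representing the same element is at least as long. -/
def IsReducedWord (G : SimpleGraph V) (w : List (V × Bool)) : Prop :=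
  ∀ w' : List (V × Bool), raagWord G w' = raagWord G w → w.length ≤ w'.length

/-- Word length of an element of `RAAG G` with respect to the vertex generating set. -/
noncomputable def raagLength (G : SimpleGraph V) (g : RAAG G) : ℕ :=
  sInf {n | ∃ w : List (V × Bool), raagWord G w = g ∧ w.length = n}

/-- Relators of the right-angled Coxeter group: squares of generators and
commutators of adjacent vertices. -/
def racgRels (G : SimpleGraph V) : Set (FreeGroup V) :=
  {r | (∃ v : V, r = FreeGroup.of v * FreeGroup.of v) ∨
    ∃ u v : V, G.Adj u v ∧
      r = FreeGroup.of u * FreeGroup.of v * (FreeGroup.of u)⁻¹ * (FreeGroup.of v)⁻¹}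

/-- The right-angled Coxeter group on a simple graph. -/
def RACG (G : SimpleGraph V) : Type _ :=
  PresentedGroup (racgRels G)

instance (G : SimpleGraph V) : Group (RACG G) :=
  inferInstanceAs (Group (PresentedGroup (racgRels G)))

/-- The generator of `RACG G` corresponding to a vertex. -/
def racgOf (G : SimpleGraph V) (v : V) : RACG G :=
  PresentedGroup.of v

/-- Evaluation of a word (a list of vertices) in `RACG G`. -/
def racgWord (G : SimpleGraph V) (w : List V) : RACG G :=
  (w.map (racgOf G)).prod

/-- A word is reduced if any word representing the same element is at least as long. -/
def IsReducedCWord (G : SimpleGraph V) (w : List V) : Prop :=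
  ∀ w' : List V, racgWord G w' = racgWord G w → w.length ≤ w'.length

/-- Word length of an element of `RACG G` with respect to the vertex generating set. -/
noncomputable def racgLength (G : SimpleGraph V) (g : RACG G) : ℕ :=
  sInf {n | ∃ w : List V, racgWord G w = g ∧ w.length = n}

section Machinery

open Relation List

set_option linter.unusedSectionVars false

variable {V : Type*} [DecidableEq V] (G : SimpleGraph V) [DecidableRel G.Adj]

lemma racg_rel_one {r : FreeGroup V} (h : r ∈ racgRels G) :
    (PresentedGroup.mk (racgRels G) r : RACG G) = 1 := by
  have hr : r ∈ Subgroup.normalClosure (racgRels G) := Subgroup.subset_normalClosure h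
  exact (QuotientGroup.eq_one_iff r).mpr hr

lemma racgOf_mul_self (v : V) : racgOf G v * racgOf G v = 1 := by
  have := racg_rel_one G (Or.inl ⟨v, rfl⟩)
  rw [map_mul] at this
  exact this

lemma racgOf_comm {u v : V} (h : G.Adj u v) : Commute (racgOf G u) (racgOf G v) := by
  have h1 := racg_rel_one G (Or.inr ⟨u, v, h, rfl⟩)
  have h2 : racgOf G u * racgOf G v * (racgOf G u)⁻¹ * (racgOf G v)⁻¹ = 1 := by
    rw [map_mul, map_mul, map_mul, map_inv, map_inv] at h1
    exact h1
  exact commutatorElement_eq_one_iff_commute.mp h2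

lemma racgOf_inv (v : V) : (racgOf G v)⁻¹ = racgOf G v :=
  inv_eq_of_mul_eq_one_right (racgOf_mul_self G v)

@[simp] lemma racgWord_nil : racgWord G [] = 1 := rfl

@[simp] lemma racgWord_cons (s : V) (w : List V) :
    racgWord G (s :: w) = racgOf G s * racgWord G w := by
  simp [racgWord]

lemma racgWord_append (a b : List V) :
    racgWord G (a ++ b) = racgWord G a * racgWord G b := by
  simp [racgWord]

lemma commute_racgWord {s : V} {a : List V} (ha : ∀ t ∈ a, G.Adj s t) :
    Commute (racgOf G s) (racgWord G a) := by
  apply Commute.list_prod_right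
  intro y hy
  obtain ⟨t, ht, rfl⟩ := List.mem_map.mp hy
  exact racgOf_comm G (ha t ht)

/-- `P s w` : the letter `s` can be cancelled within `w`, i.e. `w` has an occurrence
of `s` preceded only by letters adjacent to `s`. -/
def P (s : V) (w : List V) : Prop := ∃ a b, w = a ++ s :: b ∧ ∀ t ∈ a, G.Adj s t

lemma P_nil (s : V) : ¬ P G s [] := by
  rintro ⟨a, b, h, -⟩
  simp at h

lemma P_cons {s t : V} {w : List V} :
    P G s (t :: w) ↔ t = s ∨ (G.Adj s t ∧ P G s w) := by
  constructor
  · rintro ⟨a, b, h, ha⟩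
    cases a with
    | nil =>
      simp only [List.nil_append, List.cons.injEq] at h
      exact Or.inl h.1
    | cons x a =>
      simp only [List.cons_append, List.cons.injEq] at h
      obtain ⟨rfl, hw⟩ := h
      exact Or.inr ⟨ha t (by simp), ⟨a, b, hw, fun z hz => ha z (by simp [hz])⟩⟩
  · rintro (rfl | ⟨hadj, a, b, rfl, ha⟩)
    · exact ⟨[], w, rfl, by simp⟩
    · refine ⟨t :: a, b, rfl, ?_⟩
      intro z hz
      rcases List.mem_cons.mp hz with rfl | hz
      · exact hadj
      · exact ha z hz

lemma split_eq {u v c d : List V} {s : V} (h : u ++ v = c ++ s :: d) :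
    (∃ e, c = u ++ e ∧ v = e ++ s :: d) ∨ (∃ e, u = c ++ s :: e ∧ d = e ++ v) := by
  rcases List.append_eq_append_iff.mp h with ⟨e, he1, he2⟩ | ⟨e, he1, he2⟩
  · exact Or.inl ⟨e, he1, he2⟩
  · cases e with
    | nil =>
      left
      refine ⟨[], by simpa using he1.symm, by simpa using he2.symm⟩
    | cons z e =>
      right
      simp only [List.cons_append, List.cons.injEq] at he2
      obtain ⟨rfl, hd⟩ := he2
      exact ⟨e, he1, hd⟩

lemma P_swap {x y : V} (hxy : G.Adj x y) (α β : List V) (s : V) :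
    P G s (α ++ x :: y :: β) ↔ P G s (α ++ y :: x :: β) := by
  induction α with
  | nil =>
    simp only [List.nil_append, P_cons]
    constructor
    · rintro (rfl | ⟨hsx, (rfl | ⟨hsy, hP⟩)⟩)
      · exact Or.inr ⟨hxy, Or.inl rfl⟩
      · exact Or.inl rfl
      · exact Or.inr ⟨hsy, Or.inr ⟨hsx, hP⟩⟩
    · rintro (rfl | ⟨hsy, (rfl | ⟨hsx, hP⟩)⟩)
      · exact Or.inr ⟨hxy.symm, Or.inl rfl⟩
      · exact Or.inl rfl
      · exact Or.inr ⟨hsx, Or.inr ⟨hsy, hP⟩⟩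
  | cons t α ih =>
    simp only [List.cons_append, P_cons, ih]

lemma P_insert {r s : V} (h : G.Adj r s) (e b : List V) (hP : P G r (e ++ b)) :
    P G r (e ++ s :: b) := by
  induction e with
  | nil =>
    exact (P_cons G).mpr (Or.inr ⟨h, by simpa using hP⟩)
  | cons t e ih =>
    rcases (P_cons G).mp hP with rfl | ⟨hadj, hP'⟩
    · exact (P_cons G).mpr (Or.inl rfl)
    · exact (P_cons G).mpr (Or.inr ⟨hadj, ih hP'⟩)

/-- Cancel the first reachable occurrence of `s` in `w`. -/
def cancel (s : V) : List V → Option (List V)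
  | [] => none
  | t :: w => if t = s then some w else
      if G.Adj s t then (cancel s w).map (t :: ·) else none

lemma cancel_cons_self (s : V) (w : List V) : cancel G s (s :: w) = some w := by
  simp [cancel]

lemma cancel_append {s : V} {a : List V} (ha : ∀ t ∈ a, G.Adj s t) (w : List V) :
    cancel G s (a ++ w) = (cancel G s w).map (a ++ ·) := by
  induction a with
  | nil => cases hc : cancel G s w <;> simp [hc]
  | cons t a ih =>
    have hst : G.Adj s t := ha t (by simp)
    have hts : ¬ t = s := fun h => by subst h; exact G.loopless.irrefl t hst
    have ih' := ih (fun z hz => ha z (by simp [hz]))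
    simp only [List.cons_append, cancel, if_neg hts, if_pos hst]
    rw [ih']
    cases hc : cancel G s w <;> simp [hc]

lemma cancel_eq_some {s : V} {a : List V} (ha : ∀ t ∈ a, G.Adj s t) (b : List V) :
    cancel G s (a ++ s :: b) = some (a ++ b) := by
  rw [cancel_append G ha, cancel_cons_self]
  rfl

lemma cancel_spec {s : V} {w w' : List V} (h : cancel G s w = some w') :
    ∃ a b, w = a ++ s :: b ∧ w' = a ++ b ∧ ∀ t ∈ a, G.Adj s t := by
  induction w generalizing w' with
  | nil => simp [cancel] at h
  | cons t w ih =>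
    by_cases hts : t = s
    · subst hts
      rw [cancel_cons_self] at h
      exact ⟨[], w, rfl, by simpa using h.symm, by simp⟩
    · by_cases hadj : G.Adj s t
      · simp only [cancel, if_neg hts, if_pos hadj] at h
        rcases Option.map_eq_some_iff.mp h with ⟨w₂, hw₂, rfl⟩
        obtain ⟨a, b, rfl, rfl, ha⟩ := ih hw₂
        refine ⟨t :: a, b, rfl, rfl, ?_⟩
        intro z hz
        rcases List.mem_cons.mp hz with rfl | hz
        · exact hadj
        · exact ha z hz
      · simp [cancel, if_neg hts, if_neg hadj] at h

lemma cancel_eq_none_iff {s : V} {w : List V} : cancel G s w = none ↔ ¬ P G s w := by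
  constructor
  · rintro h ⟨a, b, rfl, ha⟩
    rw [cancel_eq_some G ha] at h
    simp at h
  · intro hP
    cases hc : cancel G s w with
    | none => rfl
    | some w' =>
      obtain ⟨a, b, hw, -, ha⟩ := cancel_spec G hc
      exact absurd ⟨a, b, hw, ha⟩ hP

/-- The action of generator `s` on words. -/
def act (s : V) (w : List V) : List V := (cancel G s w).getD (s :: w)

lemma act_neg {s : V} {w : List V} (h : ¬ P G s w) : act G s w = s :: w := by
  rw [act, (cancel_eq_none_iff G).mpr h]
  rfl

lemma act_pos {s : V} {a : List V} (ha : ∀ t ∈ a, G.Adj s t) (b : List V) :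
    act G s (a ++ s :: b) = a ++ b := by
  rw [act, cancel_eq_some G ha]
  rfl

lemma act_pos' {s : V} {a b w : List V} (ha : ∀ t ∈ a, G.Adj s t)
    (hw : w = a ++ s :: b) : act G s w = a ++ b := by
  subst hw; exact act_pos G ha b

/-- A word is (combinatorially) reduced: no letter can ever be cancelled. -/
def Red (w : List V) : Prop := ∀ p s q, w = p ++ s :: q → ¬ P G s q

lemma red_nil : Red G [] := by
  intro p s q h
  simp at h

lemma red_cons {t : V} {w : List V} : Red G (t :: w) ↔ ¬ P G t w ∧ Red G w := by
  constructor
  · intro h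
    exact ⟨h [] t w rfl, fun p s q hw => h (t :: p) s q (by rw [hw]; rfl)⟩
  · rintro ⟨h1, h2⟩ p s q hw
    cases p with
    | nil =>
      simp only [List.nil_append, List.cons.injEq] at hw
      obtain ⟨rfl, rfl⟩ := hw
      exact h1
    | cons x p =>
      simp only [List.cons_append, List.cons.injEq] at hw
      exact h2 p s q hw.2

lemma act_red {s : V} {w : List V} (hw : Red G w) : Red G (act G s w) := by
  by_cases hP : P G s w
  · obtain ⟨a, b, rfl, ha⟩ := hP
    rw [act_pos G ha]
    intro p r q heq
    rcases split_eq heq with ⟨e, hp, hb⟩ | ⟨e, ha2, hq⟩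
    · exact hw (a ++ s :: e) r q (by rw [hb]; simp)
    · subst hq
      intro hPq
      have hrs : G.Adj r s := (ha r (by rw [ha2]; simp)).symm
      exact hw p r (e ++ s :: b) (by rw [ha2]; simp) (P_insert G hrs e b hPq)
  · rw [act_neg G hP]
    exact (red_cons G).mpr ⟨hP, hw⟩

/-- Swapping two adjacent (commuting) letters. -/
inductive Swap : List V → List V → Prop
  | mk (a b : List V) (x y : V) (h : G.Adj x y) : Swap (a ++ x :: y :: b) (a ++ y :: x :: b)

/-- Equivalence of words under swaps of adjacent commuting letters. -/
def Tilde (w w' : List V) : Prop := Relation.EqvGen (Swap G) w w'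

lemma swap_symm {w w' : List V} (h : Swap G w w') : Swap G w' w := by
  rcases h with ⟨a, b, x, y, h⟩
  exact Swap.mk a b y x h.symm

lemma tilde_refl (w : List V) : Tilde G w w := Relation.EqvGen.refl w

lemma tilde_symm {w w' : List V} (h : Tilde G w w') : Tilde G w' w :=
  Relation.EqvGen.symm _ _ h

lemma tilde_trans {w w' w'' : List V} (h : Tilde G w w') (h' : Tilde G w' w'') :
    Tilde G w w'' := Relation.EqvGen.trans _ _ _ h h'

lemma tilde_of_swap {w w' : List V} (h : Swap G w w') : Tilde G w w' :=
  Relation.EqvGen.rel _ _ h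

lemma swap_length {w w' : List V} (h : Swap G w w') : w.length = w'.length := by
  rcases h with ⟨a, b, x, y, h⟩
  simp

lemma tilde_length {w w' : List V} (h : Tilde G w w') : w.length = w'.length := by
  induction h with
  | rel _ _ h => exact swap_length G h
  | refl => rfl
  | symm _ _ _ ih => exact ih.symm
  | trans _ _ _ _ _ ih1 ih2 => exact ih1.trans ih2

lemma swap_val {w w' : List V} (h : Swap G w w') : racgWord G w = racgWord G w' := by
  rcases h with ⟨a, b, x, y, h⟩
  simp only [racgWord_append, racgWord_cons]
  rw [← mul_assoc (racgOf G x) (racgOf G y), (racgOf_comm G h).eq,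
    mul_assoc (racgOf G y) (racgOf G x)]

lemma tilde_val {w w' : List V} (h : Tilde G w w') : racgWord G w = racgWord G w' := by
  induction h with
  | rel _ _ h => exact swap_val G h
  | refl => rfl
  | symm _ _ _ ih => exact ih.symm
  | trans _ _ _ _ _ ih1 ih2 => exact ih1.trans ih2

lemma swap_red {w w' : List V} (hsw : Swap G w w') (hred : Red G w) : Red G w' := by
  rcases hsw with ⟨α, β, x, y, hxy⟩
  intro p r q heq
  rcases split_eq heq with ⟨e, hp, he⟩ | ⟨e, hα, hq⟩
  · cases e with
    | nil =>
      simp only [List.nil_append, List.cons.injEq] at he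
      obtain ⟨h1, h2⟩ := he
      subst h1
      subst h2
      intro hP
      rcases (P_cons G).mp hP with h | ⟨hadj, hP'⟩
      · exact G.loopless.irrefl y (h ▸ hxy)
      · exact hred (α ++ [x]) y β (by simp) hP'
    | cons z e =>
      simp only [List.cons_append, List.cons.injEq] at he
      obtain ⟨h1, he⟩ := he
      subst h1
      cases e with
      | nil =>
        simp only [List.nil_append, List.cons.injEq] at he
        obtain ⟨h2, h3⟩ := he
        subst h2
        subst h3
        intro hP
        exact hred α x (y :: β) rfl ((P_cons G).mpr (Or.inr ⟨hxy, hP⟩))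
      | cons z' e =>
        simp only [List.cons_append, List.cons.injEq] at he
        obtain ⟨h2, he⟩ := he
        subst h2
        exact hred (α ++ x :: y :: e) r q (by rw [he]; simp)
  · subst hq
    intro hP
    exact hred p r (e ++ x :: y :: β) (by rw [hα]; simp)
      ((P_swap G hxy e β r).mpr hP)

lemma tilde_red_iff {w w' : List V} (h : Tilde G w w') : Red G w ↔ Red G w' := by
  induction h with
  | rel _ _ h => exact ⟨swap_red G h, swap_red G (swap_symm G h)⟩
  | refl => exact Iff.rfl
  | symm _ _ _ ih => exact ih.symm
  | trans _ _ _ _ _ ih1 ih2 => exact ih1.trans ih2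

lemma tilde_red {w w' : List V} (h : Tilde G w w') (hred : Red G w) : Red G w' :=
  (tilde_red_iff G h).mp hred

lemma tilde_cons {w w' : List V} (t : V) (h : Tilde G w w') :
    Tilde G (t :: w) (t :: w') := by
  induction h with
  | rel a b h =>
    apply tilde_of_swap
    rcases h with ⟨a, b, x, y, hxy⟩
    exact Swap.mk (t :: a) b x y hxy
  | refl => exact tilde_refl G _
  | symm _ _ _ ih => exact tilde_symm G ih
  | trans _ _ _ _ _ ih1 ih2 => exact tilde_trans G ih1 ih2

lemma tilde_commPrefix {s : V} {a : List V} (ha : ∀ t ∈ a, G.Adj s t) (b : List V) :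
    Tilde G (a ++ s :: b) (s :: (a ++ b)) := by
  induction a with
  | nil => exact tilde_refl G _
  | cons t a ih =>
    have h1 : Tilde G (t :: (a ++ s :: b)) (t :: s :: (a ++ b)) :=
      tilde_cons G t (ih (fun z hz => ha z (by simp [hz])))
    have h2 : Swap G (t :: s :: (a ++ b)) (s :: t :: (a ++ b)) :=
      Swap.mk [] (a ++ b) t s (ha t (by simp)).symm
    exact tilde_trans G h1 (tilde_of_swap G h2)

lemma act_val {s : V} (w : List V) :
    racgWord G (act G s w) = racgOf G s * racgWord G w := by
  by_cases hP : P G s w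
  · obtain ⟨a, b, rfl, ha⟩ := hP
    rw [act_pos G ha]
    have h1 : racgWord G (a ++ s :: b) = racgOf G s * racgWord G (a ++ b) :=
      (tilde_val G (tilde_commPrefix G ha b)).trans (racgWord_cons G s (a ++ b))
    rw [h1, ← mul_assoc, racgOf_mul_self, one_mul]
  · rw [act_neg G hP, racgWord_cons]

lemma act_len {s : V} (w : List V) : (act G s w).length ≤ w.length + 1 := by
  by_cases hP : P G s w
  · obtain ⟨a, b, rfl, ha⟩ := hP
    rw [act_pos G ha]
    simp
    omega
  · rw [act_neg G hP]
    simp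

lemma act_swap {s : V} {w w' : List V} (hsw : Swap G w w') :
    Tilde G (act G s w) (act G s w') := by
  rcases hsw with ⟨α, β, x, y, hxy⟩
  by_cases hP : P G s (α ++ x :: y :: β)
  · obtain ⟨a, b, heq, ha⟩ := hP
    rcases split_eq heq with ⟨e, hae, he⟩ | ⟨e, hα, hb⟩
    · cases e with
      | nil =>
        simp only [List.nil_append, List.cons.injEq] at he
        obtain ⟨h1, h2⟩ := he
        subst h1
        subst h2
        simp only [List.append_nil] at hae
        subst hae
        have e1 : act G x (a ++ x :: y :: β) = a ++ y :: β :=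
          act_pos' G ha rfl
        have e2 : act G x (a ++ y :: x :: β) = (a ++ [y]) ++ β := by
          refine act_pos' G ?_ (by simp)
          intro z hz
          rcases List.mem_append.mp hz with hz | hz
          · exact ha z hz
          · simp only [List.mem_singleton] at hz
            subst hz
            exact hxy
        rw [e1, e2]
        have : (a ++ [y]) ++ β = a ++ y :: β := by simp
        rw [this]
        exact tilde_refl G _
      | cons z e =>
        simp only [List.cons_append, List.cons.injEq] at he
        obtain ⟨h1, he⟩ := he
        subst h1
        cases e with
        | nil =>
          simp only [List.nil_append, List.cons.injEq] at he
          obtain ⟨h2, h3⟩ := he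
          subst h2
          subst h3
          subst hae
          have e1 : act G y (α ++ x :: y :: β) = (α ++ [x]) ++ β :=
            act_pos' G ha (by simp)
          have e2 : act G y (α ++ y :: x :: β) = α ++ x :: β :=
            act_pos' G (fun z hz => ha z (by simp [hz])) rfl
          rw [e1, e2]
          have : (α ++ [x]) ++ β = α ++ x :: β := by simp
          rw [this]
          exact tilde_refl G _
        | cons z' e =>
          simp only [List.cons_append, List.cons.injEq] at he
          obtain ⟨h2, he⟩ := he
          subst h2
          subst he
          subst hae
          -- w = α ++ x :: y :: (e ++ s :: b)
          have ha' : ∀ u ∈ α ++ y :: x :: e, G.Adj s u := by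
            intro u hu
            apply ha
            simp only [List.mem_append, List.mem_cons] at hu ⊢
            tauto
          have e1 : act G s (α ++ x :: y :: (e ++ s :: b)) = (α ++ x :: y :: e) ++ b :=
            act_pos' G ha (by simp)
          have e2 : act G s (α ++ y :: x :: (e ++ s :: b)) = (α ++ y :: x :: e) ++ b :=
            act_pos' G ha' (by simp)
          rw [e1, e2]
          have hsw : Swap G ((α ++ x :: y :: e) ++ b) ((α ++ y :: x :: e) ++ b) := by
            have h0 := Swap.mk (G := G) α (e ++ b) x y hxy
            simpa using h0
          exact tilde_of_swap G hsw
    · subst hb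
      subst hα
      have e1 : act G s ((a ++ s :: e) ++ x :: y :: β) = a ++ (e ++ x :: y :: β) :=
        act_pos' G ha (by simp)
      have e2 : act G s ((a ++ s :: e) ++ y :: x :: β) = a ++ (e ++ y :: x :: β) :=
        act_pos' G ha (by simp)
      rw [e1, e2]
      have hsw : Swap G (a ++ (e ++ x :: y :: β)) (a ++ (e ++ y :: x :: β)) := by
        have h0 := Swap.mk (G := G) (a ++ e) β x y hxy
        simpa using h0
      exact tilde_of_swap G hsw
  · have hP' : ¬ P G s (α ++ y :: x :: β) := fun h => hP ((P_swap G hxy α β s).mpr h)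
    rw [act_neg G hP, act_neg G hP']
    exact tilde_cons G s (tilde_of_swap G (Swap.mk α β x y hxy))

lemma act_tilde {s : V} {w w' : List V} (h : Tilde G w w') :
    Tilde G (act G s w) (act G s w') := by
  induction h with
  | rel _ _ h => exact act_swap G h
  | refl => exact tilde_refl G _
  | symm _ _ _ ih => exact tilde_symm G ih
  | trans _ _ _ _ _ ih1 ih2 => exact tilde_trans G ih1 ih2

lemma act_invol {s : V} {w : List V} (hred : Red G w) :
    Tilde G (act G s (act G s w)) w := by
  by_cases hP : P G s w
  · obtain ⟨a, b, rfl, ha⟩ := hP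
    rw [act_pos G ha]
    have hnP : ¬ P G s (a ++ b) := by
      rintro ⟨c, d, heq, hc⟩
      rcases split_eq heq with ⟨e, hce, hb⟩ | ⟨e, ha2, hd⟩
      · exact hred a s b rfl ⟨e, d, hb, fun z hz => hc z (by rw [hce]; simp [hz])⟩
      · exact G.loopless.irrefl s (ha s (by rw [ha2]; simp))
    rw [act_neg G hnP]
    exact tilde_symm G (tilde_commPrefix G ha b)
  · rw [act_neg G hP, act_pos' G (a := []) (b := w) (by simp) (by simp)]
    simpa using tilde_refl G w

lemma act_comm_mixed {s t : V} {w : List V} (hst : G.Adj s t)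
    (hPt : P G t w) (hPs : ¬ P G s w) :
    act G s (act G t w) = act G t (act G s w) := by
  obtain ⟨a, b, rfl, ha⟩ := hPt
  rw [act_pos G ha]
  have hnPs : ¬ P G s (a ++ b) := by
    rintro ⟨c, d, heq, hc⟩
    rcases split_eq heq with ⟨e, hce, hb⟩ | ⟨e, ha2, hd⟩
    · refine hPs ⟨a ++ t :: e, d, by rw [hb]; simp, ?_⟩
      intro z hz
      rcases List.mem_append.mp hz with hz | hz
      · exact hc z (by rw [hce]; simp [hz])
      · rcases List.mem_cons.mp hz with rfl | hz
        · exact hst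
        · exact hc z (by rw [hce]; simp [hz])
    · exact hPs ⟨c, e ++ t :: b, by rw [ha2]; simp, hc⟩
  rw [act_neg G hnPs, act_neg G hPs]
  rw [act_pos' G (a := s :: a) (b := b)
    (by intro z hz
        rcases List.mem_cons.mp hz with rfl | hz
        · exact hst.symm
        · exact (ha z hz)
      ) (by simp)]
  rfl

lemma act_comm {s t : V} {w : List V} (hst : G.Adj s t) :
    Tilde G (act G s (act G t w)) (act G t (act G s w)) := by
  by_cases hPt : P G t w <;> by_cases hPs : P G s w
  · obtain ⟨a, b, rfl, ha⟩ := hPt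
    obtain ⟨c, d, heq, hc⟩ := hPs
    rcases split_eq heq with ⟨e, hce, he⟩ | ⟨e, ha2, hd⟩
    · cases e with
      | nil =>
        simp only [List.nil_append, List.cons.injEq] at he
        exact absurd he.1 hst.ne'
      | cons z e =>
        simp only [List.cons_append, List.cons.injEq] at he
        obtain ⟨h1, he⟩ := he
        subst h1
        subst he
        subst hce
        -- w = a ++ t :: (e ++ s :: d)
        have hae : ∀ u ∈ a ++ e, G.Adj s u := by
          intro u hu
          apply hc
          simp only [List.mem_append, List.mem_cons] at hu ⊢
          tauto
        have e1 : act G t (a ++ t :: (e ++ s :: d)) = a ++ (e ++ s :: d) :=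
          act_pos' G ha rfl
        have e2 : act G s (a ++ (e ++ s :: d)) = (a ++ e) ++ d :=
          act_pos' G hae (by simp)
        have e3 : act G s (a ++ t :: (e ++ s :: d)) = (a ++ t :: e) ++ d :=
          act_pos' G hc (by simp)
        have e4 : act G t ((a ++ t :: e) ++ d) = a ++ (e ++ d) :=
          act_pos' G ha (by simp)
        rw [e1, e2, e3, e4]
        have : (a ++ e) ++ d = a ++ (e ++ d) := by simp
        rw [this]
        exact tilde_refl G _
    · subst ha2
      subst hd
      -- w = (c ++ s :: e) ++ t :: b
      have hce : ∀ u ∈ c ++ e, G.Adj t u := by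
        intro u hu
        apply ha
        simp only [List.mem_append, List.mem_cons] at hu ⊢
        tauto
      have e1 : act G s ((c ++ s :: e) ++ t :: b) = c ++ (e ++ t :: b) :=
        act_pos' G hc (by simp)
      have e2 : act G t (c ++ (e ++ t :: b)) = (c ++ e) ++ b :=
        act_pos' G hce (by simp)
      have e3 : act G t ((c ++ s :: e) ++ t :: b) = (c ++ s :: e) ++ b :=
        act_pos' G ha (by simp)
      have e4 : act G s ((c ++ s :: e) ++ b) = c ++ (e ++ b) :=
        act_pos' G hc (by simp)
      rw [e1, e2, e3, e4]
      have : (c ++ e) ++ b = c ++ (e ++ b) := by simp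
      rw [this]
      exact tilde_refl G _
  · rw [act_comm_mixed G hst hPt hPs]
    exact tilde_refl G _
  · rw [act_comm_mixed G hst.symm hPs hPt]
    exact tilde_refl G _
  · have h1 : ¬ P G s (t :: w) := by
      intro h
      rcases (P_cons G).mp h with h | ⟨-, h⟩
      · exact hst.ne h.symm
      · exact hPs h
    have h2 : ¬ P G t (s :: w) := by
      intro h
      rcases (P_cons G).mp h with h | ⟨-, h⟩
      · exact hst.ne' h.symm
      · exact hPt h
    rw [act_neg G hPt, act_neg G hPs, act_neg G h1, act_neg G h2]
    exact tilde_of_swap G (Swap.mk [] w s t hst)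

/-- The setoid of reduced words up to swaps of commuting letters. -/
def tildeSetoid : Setoid {w : List V // Red G w} :=
  ⟨fun w w' => Tilde G w.1 w'.1,
   ⟨fun w => tilde_refl G w.1, fun h => tilde_symm G h, fun h h' => tilde_trans G h h'⟩⟩

/-- Normal forms: reduced words up to swaps. -/
def NF := Quotient (tildeSetoid G)

def actQ (s : V) : NF G → NF G :=
  Quotient.lift
    (fun w : {w : List V // Red G w} =>
      (Quotient.mk (tildeSetoid G) ⟨act G s w.1, act_red G w.2⟩ : NF G))
    (fun a b h => Quotient.sound (act_tilde G h))

lemma actQ_invol (s : V) : Function.Involutive (actQ G s) := by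
  intro x
  induction x using Quotient.ind with
  | _ w => exact Quotient.sound (act_invol G w.2)

def permOf (s : V) : Equiv.Perm (NF G) := (actQ_invol G s).toPerm _

lemma permOf_apply (s : V) (w : {w : List V // Red G w}) :
    permOf G s (Quotient.mk (tildeSetoid G) w) =
      Quotient.mk (tildeSetoid G) ⟨act G s w.1, act_red G w.2⟩ := rfl

lemma permOf_comm {s t : V} (h : G.Adj s t) :
    Commute (permOf G s) (permOf G t) := by
  apply Equiv.ext
  intro x
  induction x using Quotient.ind with
  | _ w =>
    exact Quotient.sound (act_comm G h)

lemma lift_rels_one : ∀ r ∈ racgRels G, FreeGroup.lift (permOf G) r = 1 := by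
  rintro r (⟨v, rfl⟩ | ⟨u, v, hadj, rfl⟩)
  · rw [map_mul, FreeGroup.lift_apply_of]
    apply Equiv.ext
    intro x
    simp only [Equiv.Perm.mul_apply, Equiv.Perm.one_apply]
    exact (actQ_invol G v) x
  · simp only [map_mul, map_inv, FreeGroup.lift_apply_of]
    exact commutatorElement_eq_one_iff_commute.mpr (permOf_comm G hadj)

/-- The representation of the RACG on normal forms. -/
noncomputable def rep : RACG G →* Equiv.Perm (NF G) :=
  PresentedGroup.toGroup (lift_rels_one G)

lemma rep_of (v : V) : rep G (racgOf G v) = permOf G v :=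
  PresentedGroup.toGroup.of (lift_rels_one G)

/-- Successively act by the letters of a word on the empty word. -/
def foldAct : List V → List V
  | [] => []
  | s :: w => act G s (foldAct w)

lemma foldAct_red (w : List V) : Red G (foldAct G w) := by
  induction w with
  | nil => exact red_nil G
  | cons s w ih => exact act_red G ih

lemma foldAct_val (w : List V) : racgWord G (foldAct G w) = racgWord G w := by
  induction w with
  | nil => rfl
  | cons s w ih =>
    rw [show foldAct G (s :: w) = act G s (foldAct G w) from rfl, act_val G, ih,
      racgWord_cons]

lemma foldAct_len (w : List V) : (foldAct G w).length ≤ w.length := by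
  induction w with
  | nil => simp [foldAct]
  | cons s w ih =>
    calc (foldAct G (s :: w)).length ≤ (foldAct G w).length + 1 := act_len G _
    _ ≤ w.length + 1 := by omega
    _ = (s :: w).length := by simp

lemma foldAct_of_red {w : List V} (h : Red G w) : foldAct G w = w := by
  induction w with
  | nil => rfl
  | cons s w ih =>
    obtain ⟨h1, h2⟩ := (red_cons G).mp h
    rw [show foldAct G (s :: w) = act G s (foldAct G w) from rfl, ih h2, act_neg G h1]

lemma rep_word (w : List V) :
    rep G (racgWord G w) (Quotient.mk (tildeSetoid G) ⟨[], red_nil G⟩) =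
      Quotient.mk (tildeSetoid G) ⟨foldAct G w, foldAct_red G w⟩ := by
  induction w with
  | nil => rw [racgWord_nil, map_one]; rfl
  | cons s w ih =>
    rw [racgWord_cons, map_mul]
    show (rep G (racgOf G s)) ((rep G (racgWord G w)) _) = _
    rw [ih, rep_of]
    rfl

/-- Key theorem: a combinatorially reduced word has minimal length among all words
representing the same element. -/
theorem red_min {w w' : List V} (hw : Red G w) (h : racgWord G w' = racgWord G w) :
    w.length ≤ w'.length := by
  have h1 := rep_word G w'
  rw [h, rep_word G w] at h1
  have h2 : Tilde G (foldAct G w) (foldAct G w') := Quotient.exact h1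
  have h3 := tilde_length G h2
  rw [foldAct_of_red G hw] at h3
  calc w.length = (foldAct G w').length := h3
  _ ≤ w'.length := foldAct_len G w'

lemma exists_word (g : RACG G) : ∃ w : List V, racgWord G w = g := by
  obtain ⟨x, rfl⟩ := PresentedGroup.mk_surjective (racgRels G) g
  induction x using FreeGroup.induction_on with
  | C1 => exact ⟨[], by rw [racgWord_nil, map_one]; rfl⟩
  | of v => exact ⟨[v], by rw [racgWord_cons, racgWord_nil, mul_one]; rfl⟩
  | inv_of v _ =>
    refine ⟨[v], ?_⟩
    rw [racgWord_cons, racgWord_nil, mul_one, map_inv, ← racgOf_inv G v]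
    rfl
  | mul x y ihx ihy =>
    obtain ⟨w1, h1⟩ := ihx
    obtain ⟨w2, h2⟩ := ihy
    exact ⟨w1 ++ w2, by rw [racgWord_append, h1, h2, map_mul]; rfl⟩

lemma racgLength_le {w : List V} {g : RACG G} (h : racgWord G w = g) :
    racgLength G g ≤ w.length :=
  Nat.sInf_le ⟨w, h, rfl⟩

lemma racgLength_eq_of_red {w : List V} (hw : Red G w) :
    racgLength G (racgWord G w) = w.length := by
  refine le_antisymm (racgLength_le G rfl) (le_csInf ⟨w.length, w, rfl, rfl⟩ ?_)
  rintro n ⟨w', hw', rfl⟩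
  exact red_min G hw hw'

lemma exists_red_word (g : RACG G) :
    ∃ w : List V, Red G w ∧ racgWord G w = g ∧ racgLength G g = w.length := by
  obtain ⟨w0, rfl⟩ := exists_word G g
  refine ⟨foldAct G w0, foldAct_red G w0, foldAct_val G w0, ?_⟩
  rw [← foldAct_val G w0]
  exact racgLength_eq_of_red G (foldAct_red G w0)

lemma eq_one_of_racgLength_zero {g : RACG G} (h : racgLength G g = 0) : g = 1 := by
  obtain ⟨w, -, hval, hlen⟩ := exists_red_word G g
  rw [h] at hlen
  rw [← hval, List.length_eq_zero_iff.mp hlen.symm, racgWord_nil]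

end Machinery

section Application

variable {VΛ VΓ : Type*}

lemma bind_split [DecidableEq VΛ] (F : VΓ → List VΛ) {w : List VΓ} {e b : List VΛ} {v : VΛ}
    (h : e ++ v :: b = w.flatMap F) :
    ∃ p x q c d, w = p ++ x :: q ∧ F x = c ++ v :: d ∧
      e = p.flatMap F ++ c ∧ b = d ++ q.flatMap F := by
  induction w generalizing e with
  | nil =>
    rw [show ([] : List VΓ).flatMap F = [] from rfl] at h
    exact absurd h (by simp)
  | cons x0 w ih =>
    rw [show (x0 :: w).flatMap F = F x0 ++ w.flatMap F from rfl] at h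
    rcases split_eq h.symm with ⟨e', he1, he2⟩ | ⟨e', he1, he2⟩
    · obtain ⟨p, x, q, c, d, hw, hFx, hee, hbb⟩ := ih he2.symm
      exact ⟨x0 :: p, x, q, c, d, by rw [hw]; rfl, hFx,
        by rw [he1, hee]; simp [show (x0 :: p).flatMap F = F x0 ++ p.flatMap F from rfl], hbb⟩
    · exact ⟨[], x0, w, e, e', rfl, he1, by simp, he2⟩

end Application

/-- A surjective, locally surjective graph morphism `f : Λ → Γ` induces
an injective, quasi-isometric diagonal embedding `C(Γ^c) → C(Λ^c)` of right-angled
Coxeter groups. -/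
theorem kapovich_embedding_racg {VΛ VΓ : Type*} [Fintype VΛ] [Fintype VΓ]
    (Λ : SimpleGraph VΛ) (Γ : SimpleGraph VΓ) (f : VΛ → VΓ)
    (hmap : ∀ a b, Λ.Adj a b → Γ.Adj (f a) (f b))
    (hsurj : Function.Surjective f)
    (hloc : ∀ (v : VΛ) (u : VΓ), Γ.Adj (f v) u → ∃ v', Λ.Adj v v' ∧ f v' = u) :
    ∃ φ : RACG Γᶜ →* RACG Λᶜ, Function.Injective φ ∧
      (∀ u : VΓ, ∃ l : List VΛ, l.Nodup ∧ (∀ v, v ∈ l ↔ f v = u) ∧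
        φ (racgOf Γᶜ u) = (l.map (racgOf Λᶜ)).prod) ∧
      ∃ L : ℕ, 0 < L ∧ ∀ g : RACG Γᶜ,
        racgLength Γᶜ g ≤ L * racgLength Λᶜ (φ g) ∧
        racgLength Λᶜ (φ g) ≤ L * racgLength Γᶜ g := by
  classical
  -- The fiber of `u`, as a list.
  set F : VΓ → List VΛ := fun u => (Finset.univ.filter (fun v => f v = u)).toList with hF
  have hFnodup : ∀ u, (F u).Nodup := fun u => Finset.nodup_toList _
  have hFmem : ∀ u v, v ∈ F u ↔ f v = u := by
    intro u v
    simp [hF, Finset.mem_toList]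
  have hFne : ∀ u, F u ≠ [] := by
    intro u h
    obtain ⟨v, hv⟩ := hsurj u
    have := (hFmem u v).mpr hv
    rw [h] at this
    simp at this
  -- Elements of a common fiber commute in `RACG Λᶜ`.
  have hfib_comm : ∀ u : VΓ, ∀ x ∈ F u, ∀ y ∈ F u,
      Commute (racgOf Λᶜ x) (racgOf Λᶜ y) := by
    intro u x hx y hy
    by_cases hxy : x = y
    · subst hxy; exact Commute.refl _
    · refine racgOf_comm Λᶜ ((SimpleGraph.compl_adj _ _ _).mpr ⟨hxy, fun hadj => ?_⟩)
      have := hmap x y hadj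
      rw [(hFmem u x).mp hx, (hFmem u y).mp hy] at this
      exact Γ.loopless.irrefl u this
  -- The diagonal images of the generators.
  have hsq : ∀ (l : List VΛ), (∀ x ∈ l, ∀ y ∈ l, Commute (racgOf Λᶜ x) (racgOf Λᶜ y)) →
      (l.map (racgOf Λᶜ)).prod * (l.map (racgOf Λᶜ)).prod = 1 := by
    intro l
    induction l with
    | nil => simp
    | cons x l ih =>
      intro h
      simp only [List.map_cons, List.prod_cons]
      have hc : Commute (racgOf Λᶜ x) ((l.map (racgOf Λᶜ)).prod) := by
        apply Commute.list_prod_right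
        intro y hy
        obtain ⟨t, ht, rfl⟩ := List.mem_map.mp hy
        exact h x (by simp) t (by simp [ht])
      nth_rewrite 1 [hc.eq]
      rw [mul_assoc, ← mul_assoc (racgOf Λᶜ x) (racgOf Λᶜ x), racgOf_mul_self, one_mul,
        ih (fun a ha b hb => h a (by simp [ha]) b (by simp [hb]))]
  have hcross : ∀ u u' : VΓ, Γᶜ.Adj u u' →
      Commute ((F u).map (racgOf Λᶜ)).prod ((F u').map (racgOf Λᶜ)).prod := by
    intro u u' huu'
    apply Commute.list_prod_right
    intro y hy
    obtain ⟨t, ht, rfl⟩ := List.mem_map.mp hy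
    apply Commute.list_prod_left
    intro z hz
    obtain ⟨x, hx, rfl⟩ := List.mem_map.mp hz
    have hfx : f x = u := (hFmem u x).mp hx
    have hft : f t = u' := (hFmem u' t).mp ht
    refine racgOf_comm Λᶜ ((SimpleGraph.compl_adj _ _ _).mpr ⟨?_, fun hadj => ?_⟩)
    · rintro rfl
      exact ((SimpleGraph.compl_adj _ _ _).mp huu').1 (hfx ▸ hft ▸ rfl)
    · have := hmap x t hadj
      rw [hfx, hft] at this
      exact ((SimpleGraph.compl_adj _ _ _).mp huu').2 this
  -- The diagonal homomorphism.
  have hrels : ∀ r ∈ racgRels Γᶜ,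
      FreeGroup.lift (fun u => ((F u).map (racgOf Λᶜ)).prod) r = (1 : RACG Λᶜ) := by
    rintro r (⟨v, rfl⟩ | ⟨u, v, hadj, rfl⟩)
    · rw [map_mul, FreeGroup.lift_apply_of]
      exact hsq (F v) (hfib_comm v)
    · simp only [map_mul, map_inv, FreeGroup.lift_apply_of]
      exact commutatorElement_eq_one_iff_commute.mpr (hcross u v hadj)
  set φ : RACG Γᶜ →* RACG Λᶜ := PresentedGroup.toGroup hrels with hφ
  have hφof : ∀ u, φ (racgOf Γᶜ u) = ((F u).map (racgOf Λᶜ)).prod := by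
    intro u
    exact PresentedGroup.toGroup.of hrels
  have hφword : ∀ w : List VΓ, φ (racgWord Γᶜ w) = racgWord Λᶜ (w.flatMap F) := by
    intro w
    induction w with
    | nil => simp [map_one]
    | cons s w ih =>
      rw [racgWord_cons, map_mul, hφof, ih, show (s :: w).flatMap F = F s ++ w.flatMap F from rfl,
        racgWord_append]
      rfl
  -- Key combinatorial fact: fibers of reduced words form reduced words.
  have hnotP : ∀ (u : VΓ) (v : VΛ), f v = u → ∀ (l : List VΛ), (∀ t ∈ l, f t = u) →
      v ∉ l → ∀ (w : List VΓ), ¬ P Γᶜ u w → ¬ P Λᶜ v (l ++ w.flatMap F) := by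
    intro u v hv l hl hvl w hPw
    rintro ⟨a, b, heq, ha⟩
    rcases split_eq heq with ⟨e, hae, hbind⟩ | ⟨e, hle, hbe⟩
    · -- a = l ++ e, w.flatMap F = e ++ v :: b
      obtain ⟨p, x, q, c, d, hw, hFx, hec, hbd⟩ := bind_split F hbind.symm
      have hxu : x = u := by
        have : v ∈ F x := by rw [hFx]; simp
        rw [← (hFmem x v).mp this, hv]
      rw [hxu] at hw hFx
      refine hPw ⟨p, q, hw, ?_⟩
      intro t ht
      have hsuba : ∀ z ∈ F t, Λᶜ.Adj v z := by
        intro z hz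
        apply ha
        rw [hae, hec]
        have : z ∈ p.flatMap F := List.mem_flatMap.mpr ⟨t, ht, hz⟩
        simp [this]
      have htu : t ≠ u := by
        rintro rfl
        exact Λᶜ.loopless.irrefl v (hsuba v ((hFmem t v).mpr hv))
      have hnadj : ¬ Γ.Adj u t := by
        intro hadj
        obtain ⟨v', hvv', hfv'⟩ := hloc v t (hv ▸ hadj)
        exact ((SimpleGraph.compl_adj _ _ _).mp (hsuba v' ((hFmem t v').mpr hfv'))).2 hvv'
      exact (SimpleGraph.compl_adj _ _ _).mpr ⟨htu.symm, hnadj⟩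
    · -- l = a ++ v :: e : contradiction with v ∉ l
      exact hvl (by rw [hle]; simp)
  have haux : ∀ (w : List VΓ), Red Λᶜ (w.flatMap F) → ∀ (u : VΓ), ¬ P Γᶜ u w →
      ∀ (l : List VΛ), l.Nodup → (∀ t ∈ l, f t = u) → Red Λᶜ (l ++ w.flatMap F) := by
    intro w hred u hPu l
    induction l with
    | nil => intro _ _; simpa using hred
    | cons v l ih =>
      intro hnd hl
      have h1 : Red Λᶜ (l ++ w.flatMap F) :=
        ih (List.Nodup.of_cons hnd) (fun t ht => hl t (by simp [ht]))
      have h2 : ¬ P Λᶜ v (l ++ w.flatMap F) :=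
        hnotP u v (hl v (by simp)) l (fun t ht => hl t (by simp [ht]))
          ((List.nodup_cons.mp hnd).1) w hPu
      exact (red_cons Λᶜ).mpr ⟨h2, h1⟩
  have hbindred : ∀ w : List VΓ, Red Γᶜ w → Red Λᶜ (w.flatMap F) := by
    intro w
    induction w with
    | nil => intro _; exact red_nil Λᶜ
    | cons u w ih =>
      intro hred
      obtain ⟨hP, hred'⟩ := (red_cons Γᶜ).mp hred
      rw [show (u :: w).flatMap F = F u ++ w.flatMap F from rfl]
      exact haux w (ih hred') u hP (F u) (hFnodup u) (fun t ht => (hFmem u t).mp ht)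
  -- Length bounds for the bind.
  have hlen_lower : ∀ w : List VΓ, w.length ≤ (w.flatMap F).length := by
    intro w
    induction w with
    | nil => simp
    | cons u w ih =>
      rw [show (u :: w).flatMap F = F u ++ w.flatMap F from rfl, List.length_append, List.length_cons]
      have : 0 < (F u).length := List.length_pos_iff.mpr (hFne u)
      omega
  have hlen_upper : ∀ w : List VΓ, (w.flatMap F).length ≤ Fintype.card VΛ * w.length := by
    intro w
    induction w with
    | nil => simp
    | cons u w ih =>
      rw [show (u :: w).flatMap F = F u ++ w.flatMap F from rfl, List.length_append, List.length_cons]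
      have h1 : (F u).length ≤ Fintype.card VΛ := (hFnodup u).length_le_card
      rw [Nat.mul_succ]
      omega
  -- The main length comparison.
  have main : ∀ g : RACG Γᶜ, racgLength Γᶜ g ≤ racgLength Λᶜ (φ g) ∧
      racgLength Λᶜ (φ g) ≤ Fintype.card VΛ * racgLength Γᶜ g := by
    intro g
    obtain ⟨w, hwred, hwval, hwlen⟩ := exists_red_word Γᶜ g
    have hW : φ g = racgWord Λᶜ (w.flatMap F) := by rw [← hwval, hφword]
    have hWlen : racgLength Λᶜ (φ g) = (w.flatMap F).length := by
      rw [hW]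
      exact racgLength_eq_of_red Λᶜ (hbindred w hwred)
    constructor
    · rw [hwlen, hWlen]
      exact hlen_lower w
    · rw [hwlen, hWlen]
      exact hlen_upper w
  have hone : racgLength Λᶜ (1 : RACG Λᶜ) = 0 := by
    have h1 : racgLength Λᶜ (1 : RACG Λᶜ) ≤ ([] : List VΛ).length :=
      racgLength_le Λᶜ (racgWord_nil Λᶜ)
    simpa using h1
  refine ⟨φ, ?_, ?_, ?_⟩
  · -- injectivity
    rw [injective_iff_map_eq_one]
    intro g hg
    apply eq_one_of_racgLength_zero Γᶜ
    have h1 := (main g).1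
    rw [hg, hone] at h1
    omega
  · intro u
    exact ⟨F u, hFnodup u, fun v => hFmem u v, hφof u⟩
  · refine ⟨Fintype.card VΛ + 1, by omega, fun g => ⟨?_, ?_⟩⟩
    · calc racgLength Γᶜ g ≤ racgLength Λᶜ (φ g) := (main g).1
      _ ≤ (Fintype.card VΛ + 1) * racgLength Λᶜ (φ g) := Nat.le_mul_of_pos_left _ (by omega)
    · calc racgLength Λᶜ (φ g) ≤ Fintype.card VΛ * racgLength Γᶜ g := (main g).2
      _ ≤ (Fintype.card VΛ + 1) * racgLength Γᶜ g := Nat.mul_le_mul_right _ (by omega)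

end Paper
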